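/- Let 0 < β < 4 and suppose I_2(β) ≤ I_1(β)/2. Then I_ℓ(β) ≤ I_1(β)/ℓ for every integer ℓ ≥ 1, and the inequality is strict for every ℓ ≥ 3. -/

import Mathlib

/-!
For `β > 0` every `I_n(β)` is positive: expanding the exponential,
`I_n(β) = ∑ₖ βᵏ/k! ∫₀¹ cos(2πu)ᵏ cos(2πnu) du`, and by the product-to-sum formula these moments
are nonnegative, the `k = n` one positive. Integrating the derivative of
`e^{β cos 2πu} sin(2π(n+1)u)` over a period gives the recurrence
`2(n+1) I_{n+1} = β (I_n - I_{n+2})`, so `2(n+1) I_{n+1} < β I_n ≤ 2n I_n` once `n ≥ 2` and `β ≤ 4`.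
Thus `ℓ I_ℓ` decreases strictly from `ℓ = 2` on, and `2 I_2 ≤ I_1` by hypothesis.
-/

open MeasureTheory Real
open scoped Real

noncomputable section

/-- The `n`-th modified Bessel function of the first kind,
`I_n(β) = ∫_0^1 e^{β cos(2πu)} cos(2πnu) du`. -/
def besselI (n : ℕ) (β : ℝ) : ℝ :=
  ∫ u in (0 : ℝ)..1, Real.exp (β * Real.cos (2 * π * u)) * Real.cos (2 * π * n * u)

def cosMoment (k n : ℕ) : ℝ := ∫ u in (0 : ℝ)..1, cos (2 * π * u) ^ k * cos (2 * π * n * u)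

lemma sin_two_pi_mul_natCast (m : ℕ) : sin (2 * π * m) = 0 := by
  simpa [mul_comm, mul_left_comm] using sin_nat_mul_pi (2 * m)

lemma cosMoment_zero_zero : cosMoment 0 0 = 1 := by
  simp [cosMoment]

lemma cosMoment_zero_succ (n : ℕ) : cosMoment 0 (n + 1) = 0 := by
  have hω : (2 * π * (n + 1) : ℝ) ≠ 0 := by positivity
  have hsin := sin_two_pi_mul_natCast (n + 1)
  push_cast at hsin
  simp only [cosMoment, pow_zero, one_mul, Nat.cast_add, Nat.cast_one]
  rw [intervalIntegral.integral_comp_mul_left (fun x => cos x) hω, integral_cos]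
  simp [hsin]

lemma cosMoment_succ_zero (k : ℕ) : cosMoment (k + 1) 0 = cosMoment k 1 := by
  simp only [cosMoment, Nat.cast_zero, Nat.cast_one, mul_zero, zero_mul, cos_zero, mul_one,
    pow_succ]

lemma cosMoment_succ_succ (k n : ℕ) :
    cosMoment (k + 1) (n + 1) = (cosMoment k n + cosMoment k (n + 2)) / 2 := by
  have hint : ∀ m : ℕ, IntervalIntegrable (fun u => cos (2 * π * u) ^ k * cos (2 * π * m * u))
      volume 0 1 := fun m => by apply Continuous.intervalIntegrable; fun_prop
  rw [cosMoment, cosMoment, cosMoment, ← intervalIntegral.integral_add (hint n) (hint (n + 2)),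
    ← intervalIntegral.integral_div]
  congr 1 with u
  have := two_mul_cos_mul_cos (2 * π * u) (2 * π * (n + 1) * u)
  push_cast
  rw [show 2 * π * u - 2 * π * (n + 1) * u = -(2 * π * n * u) by ring, cos_neg,
    show 2 * π * u + 2 * π * (n + 1) * u = 2 * π * (n + 2) * u by ring] at this
  rw [pow_succ]
  linear_combination (cos (2 * π * u) ^ k / 2) * this

lemma cosMoment_nonneg (k n : ℕ) : 0 ≤ cosMoment k n := by
  induction k generalizing n with
  | zero => cases n <;> simp [cosMoment_zero_zero, cosMoment_zero_succ]
  | succ k ih => cases n with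
    | zero => simpa [cosMoment_succ_zero] using ih 1
    | succ n => rw [cosMoment_succ_succ]; have := ih n; have := ih (n + 2); positivity

lemma cosMoment_self_pos (n : ℕ) : 0 < cosMoment n n := by
  induction n with
  | zero => simp [cosMoment_zero_zero]
  | succ n ih => rw [cosMoment_succ_succ]; have := cosMoment_nonneg n (n + 2); positivity

lemma hasSum_besselI (n : ℕ) (β : ℝ) :
    HasSum (fun k => β ^ k / k.factorial * cosMoment k n) (besselI n β) := by
  set F : ℕ → ℝ → ℝ := fun k u =>
    β ^ k / k.factorial * (cos (2 * π * u) ^ k * cos (2 * π * n * u))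
  have hbound : ∀ k u, ‖F k u‖ ≤ |β| ^ k / k.factorial := by
    intro k u
    rw [norm_mul, norm_mul, norm_pow, norm_div, norm_pow, Real.norm_natCast, Real.norm_eq_abs]
    have hc : ‖cos (2 * π * u)‖ ^ k * ‖cos (2 * π * n * u)‖ ≤ 1 :=
      mul_le_one₀ (pow_le_one₀ (norm_nonneg _) (abs_cos_le_one _)) (norm_nonneg _)
        (abs_cos_le_one _)
    exact mul_le_of_le_one_right (by positivity) hc
  have hsum : ∀ u, HasSum (F · u) (exp (β * cos (2 * π * u)) * cos (2 * π * n * u)) := by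
    intro u
    set x := β * cos (2 * π * u)
    set c := cos (2 * π * n * u)
    have hF : (F · u) = fun k => x ^ k / k.factorial * c := by
      ext k; simp only [F, x, c]; ring
    rw [hF, exp_eq_exp_ℝ]
    exact (NormedSpace.expSeries_div_hasSum_exp x).mul_right c
  have := intervalIntegral.hasSum_integral_of_dominated_convergence (μ := volume) (a := 0) (b := 1)
    (F := F) (fun k _ => |β| ^ k / k.factorial)
    (fun k => by apply Continuous.aestronglyMeasurable; fun_prop)
    (fun k => ae_of_all _ fun u _ => hbound k u)
    (ae_of_all _ fun _ _ => summable_pow_div_factorial |β|) intervalIntegrable_const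
    (ae_of_all _ fun u _ => hsum u)
  simpa only [F, cosMoment, besselI, intervalIntegral.integral_const_mul] using this

lemma besselI_pos (n : ℕ) {β : ℝ} (hβ : 0 < β) : 0 < besselI n β := by
  have hterm : 0 < β ^ n / n.factorial * cosMoment n n := by
    have := cosMoment_self_pos n; positivity
  exact hterm.trans_le <| le_hasSum (hasSum_besselI n β) n fun k _ => by
    have := cosMoment_nonneg k n; positivity

lemma besselI_recurrence (n : ℕ) (β : ℝ) :
    2 * (n + 1) * besselI (n + 1) β = β * (besselI n β - besselI (n + 2) β) := by
  set f : ℕ → ℝ → ℝ := fun m u => exp (β * cos (2 * π * u)) * cos (2 * π * m * u)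
  have hf : ∀ m, IntervalIntegrable (f m) volume 0 1 := fun m => by
    apply Continuous.intervalIntegrable; fun_prop
  have hderiv : ∀ u, HasDerivAt (fun u => exp (β * cos (2 * π * u)) * sin (2 * π * (n + 1) * u))
      (π * (2 * (n + 1) * f (n + 1) u + β * f (n + 2) u - β * f n u)) u := by
    intro u
    refine ((((hasDerivAt_id u).const_mul (2 * π)).cos.const_mul β).exp.mul
      ((hasDerivAt_id u).const_mul (2 * π * (n + 1))).sin).congr_deriv ?_
    have := two_mul_sin_mul_sin (2 * π * (n + 1) * u) (2 * π * u)
    simp only [f, id, mul_one, Nat.cast_add, Nat.cast_one, Nat.cast_ofNat]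
    rw [show 2 * π * (n + 1) * u - 2 * π * u = 2 * π * n * u by ring,
      show 2 * π * (n + 1) * u + 2 * π * u = 2 * π * (n + 2) * u by ring] at this
    linear_combination (-(π * β) * exp (β * cos (2 * π * u))) * this
  have hadd := ((hf (n + 1)).const_mul (2 * (n + 1))).add ((hf (n + 2)).const_mul β)
  have hftc := intervalIntegral.integral_eq_sub_of_hasDerivAt (fun u _ => hderiv u)
    ((hadd.sub ((hf n).const_mul β)).const_mul π)
  rw [intervalIntegral.integral_const_mul, intervalIntegral.integral_sub hadd ((hf n).const_mul β),
    intervalIntegral.integral_add ((hf (n + 1)).const_mul _) ((hf (n + 2)).const_mul _),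
    intervalIntegral.integral_const_mul, intervalIntegral.integral_const_mul,
    intervalIntegral.integral_const_mul] at hftc
  have hsin := sin_two_pi_mul_natCast (n + 1)
  push_cast at hsin
  simp only [mul_one, mul_zero, sin_zero, hsin, sub_zero] at hftc
  have hI : ∀ m, ∫ u in (0 : ℝ)..1, f m u = besselI m β := fun m => rfl
  rw [hI, hI, hI] at hftc
  linear_combination (mul_eq_zero.1 hftc).resolve_left pi_ne_zero

lemma two_mul_succ_mul_besselI_succ_lt (n : ℕ) {β : ℝ} (hβ : 0 < β) :
    2 * (n + 1) * besselI (n + 1) β < β * besselI n β := by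
  rw [besselI_recurrence, mul_sub]
  linarith [mul_pos hβ (besselI_pos (n + 2) hβ)]

lemma succ_mul_besselI_succ_lt {β : ℝ} (hβ0 : 0 < β) (hβ4 : β ≤ 4) {n : ℕ} (hn : 2 ≤ n) :
    ((n + 1 : ℕ) : ℝ) * besselI (n + 1) β < n * besselI n β := by
  have hβn : β * besselI n β ≤ 2 * n * besselI n β := by
    have : (2 : ℝ) ≤ n := by exact_mod_cast hn
    exact mul_le_mul_of_nonneg_right (by linarith) (besselI_pos n hβ0).le
  push_cast
  linarith [two_mul_succ_mul_besselI_succ_lt n hβ0]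

lemma strictAntiOn_natCast_mul_besselI {β : ℝ} (hβ0 : 0 < β) (hβ4 : β ≤ 4) :
    StrictAntiOn (fun m : ℕ => (m : ℝ) * besselI m β) (Set.Ici 2) := fun _ hk _ _ hkl =>
  Nat.rel_of_forall_rel_succ_of_le_of_lt (· > ·) (f := fun m : ℕ => (m : ℝ) * besselI m β)
    (fun _ hn => succ_mul_besselI_succ_lt hβ0 hβ4 hn) hk hkl

/-- **Decay of Bessel coefficients below the tricritical point.** If `0 < β < 4` and
`I_2(β) ≤ I_1(β)/2` (equivalently `β ≤ β_*`), then `I_ℓ(β) ≤ I_1(β)/ℓ` for every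
`ℓ ≥ 1`, strictly for every `ℓ ≥ 3`. -/
theorem besselI_decay (β : ℝ) (hβ0 : 0 < β) (hβ4 : β < 4)
    (h2 : besselI 2 β ≤ besselI 1 β / 2) :
    (∀ ℓ : ℕ, 1 ≤ ℓ → besselI ℓ β ≤ besselI 1 β / ℓ) ∧
    (∀ ℓ : ℕ, 3 ≤ ℓ → besselI ℓ β < besselI 1 β / ℓ) := by
  have hanti := strictAntiOn_natCast_mul_besselI hβ0 hβ4.le
  have hI2 : ((2 : ℕ) : ℝ) * besselI 2 β ≤ besselI 1 β := by
    rw [le_div_iff₀ two_pos] at h2; push_cast; linarith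
  refine ⟨fun ℓ hℓ => ?_, fun ℓ hℓ => ?_⟩
  · rw [le_div_iff₀ (by positivity), mul_comm]
    obtain rfl | rfl | hℓ3 : ℓ = 1 ∨ ℓ = 2 ∨ 2 < ℓ := by omega
    · simp
    · exact hI2
    · exact (hanti (Set.mem_Ici.2 le_rfl) (Set.mem_Ici.2 hℓ3.le) hℓ3).le.trans hI2
  · rw [lt_div_iff₀ (by positivity), mul_comm]
    exact (hanti (Set.mem_Ici.2 le_rfl) (Set.mem_Ici.2 (by omega)) hℓ).trans_le hI2
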